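/- arXiv:1706.04064 — 4 statements merged into one kernel-verified Lean document; each statement's English description precedes it below -/
import Mathlib

section
/- Let Y be a non-negative integer-valued random variable with E[Y] > 0, and suppose there is a coupling (Y, Y*) of Y with its size-biased version Y* and a p ∈ (0,1] such that P(Y* ≤ Y + 1 | Y* ≥ x) ≥ p for every x with P(Y* ≥ x) > 0. Then for every x, p·P(Y* ≥ x) ≤ P(Y + 1 ≥ x); equivalently, I_p·Y* ≤_st Y + 1, where I_p is a Bernoulli random variable with mean p independent of Y*. -/
open MeasureTheory ProbabilityTheory

lemma mul_measureReal_le_of_le_div {α : Type*} [MeasurableSpace α] (μ : Measure α)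
    [IsFiniteMeasure μ] {s t : Set α} {p : ℝ} (h : 0 < μ s → p ≤ μ.real t / μ.real s) :
    p * μ.real s ≤ μ.real t := by
  rcases eq_zero_or_pos (μ s) with hs | hs
  · simp [Measure.real, hs]
  · have hs_real : 0 < μ.real s := ENNReal.toReal_pos hs.ne' (measure_ne_top μ s)
    exact (le_div_iff₀ hs_real).mp (h hs)

theorem size_bias_approx_monotone_tail_bound_general
    {Ω : Type*} [MeasurableSpace Ω] (P : Measure Ω) [IsProbabilityMeasure P]
    (Y Ys : Ω → ℕ)
    (p : ℝ)
    (hcond : ∀ x : ℕ, 0 < P {ω | x ≤ Ys ω} →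
      p ≤ (P {ω | Ys ω ≤ Y ω + 1 ∧ x ≤ Ys ω}).toReal / (P {ω | x ≤ Ys ω}).toReal) :
    ∀ x : ℕ, p * (P {ω | x ≤ Ys ω}).toReal ≤ (P {ω | x ≤ Y ω + 1}).toReal := by
  intro x
  calc p * P.real {ω | x ≤ Ys ω}
      ≤ P.real {ω | Ys ω ≤ Y ω + 1 ∧ x ≤ Ys ω} := mul_measureReal_le_of_le_div P (hcond x)
    _ ≤ P.real {ω | x ≤ Y ω + 1} := measureReal_mono fun ω hω => hω.2.trans hω.1

/-- If `(Y, Ys)` is a coupling of `Y` with its size-biased version such that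
`P(Ys ≤ Y + 1 | Ys ≥ x) ≥ p` whenever `P(Ys ≥ x) > 0`, then
`p·P(Ys ≥ x) ≤ P(Y + 1 ≥ x)` for every `x`; that is, `I_p·Ys ≤_st Y + 1`. -/
theorem size_bias_approx_monotone_tail_bound
    {Ω : Type*} [MeasurableSpace Ω] (P : Measure Ω) [IsProbabilityMeasure P]
    (Y Ys : Ω → ℕ) (hYmeas : Measurable Y) (hYsmeas : Measurable Ys)
    (μ : ℝ) (hμ : μ = ∫ ω, (Y ω : ℝ) ∂P) (hμpos : 0 < μ)
    (hInt : Integrable (fun ω => (Y ω : ℝ)) P)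
    (hsb : ∀ j : ℕ, (P {ω | Ys ω = j}).toReal = j * (P {ω | Y ω = j}).toReal / μ)
    (p : ℝ) (hp0 : 0 < p) (hp1 : p ≤ 1)
    (hcond : ∀ x : ℕ, 0 < P {ω | x ≤ Ys ω} →
      p ≤ (P {ω | Ys ω ≤ Y ω + 1 ∧ x ≤ Ys ω}).toReal / (P {ω | x ≤ Ys ω}).toReal) :
    ∀ x : ℕ, p * (P {ω | x ≤ Ys ω}).toReal ≤ (P {ω | x ≤ Y ω + 1}).toReal :=
  size_bias_approx_monotone_tail_bound_general P Y Ys p hcond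
end

section
/- Let W be a non-negative integer-valued random variable with E[W] = ν > 0, and suppose there is a joint construction (W, Z, W*), where W* has the size-biased distribution of W and Z is a non-negative integer-valued random variable, such that W + 1 − Z ≤ W* almost surely. Let X be a non-negative integer-valued random variable with E[X] = φ < ∞, independent of (W, Z, W*), and let ξ ~ Be(q) with q ∈ (0,1] be independent of all else. Set Y = ξ·W + X. Then there exist a coupling (Y, Y*) of Y with its size-biased version Y* and a non-negative integer-valued random variable Z̃ on the same space with the same distribution as Z, such that P(Y* ≥ Y + 1 − Z̃ | Y + 1 − Z̃ ≥ x) ≥ q²ν/(qν + φ) for every x with P(Y + 1 − Z̃ ≥ x) > 0. -/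
/-!
Size-biasing is additive over independent summands: the first-moment measure `n • μ{n}` of a
convolution obeys the Leibniz rule `(μ ∗ ν)' = μ' ∗ ν + μ ∗ ν'`. Hence `(ξW + X)*` is realised by
replacing `ξW` by `W*` with probability `qν/(qν + φ)`, and `X` by an independent `X*` otherwise;
`W*` is also the size-biased version of `ξW`, since thinning by `ξ` only moves mass to `0`.
When the first option is taken and `ξ = 1`, an event of probability `q · qν/(qν + φ)` independent
of `(W, Z, X)`, the hypothesis `W + 1 - Z ≤ W*` gives `Y* ≥ Y + 1 - Z`; finally `ξW ≤ W`, so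
`{Y + 1 - Z ≥ x}` is contained in `{W + X + 1 - Z ≥ x}`.
-/

open MeasureTheory ProbabilityTheory
open scoped ENNReal

namespace MeasureTheory.Measure

variable {α β : Type*} [MeasurableSpace α] [MeasurableSpace β]

theorem withDensity_map (μ : Measure α) {f : α → β} {g : β → ℝ≥0∞} (hf : Measurable f)
    (hg : Measurable g) : (μ.map f).withDensity g = (μ.withDensity (g ∘ f)).map f := by
  ext s hs
  rw [withDensity_apply _ hs, map_apply hf hs, withDensity_apply _ (hf hs),
    setLIntegral_map hs hg hf, Function.comp_def]

theorem withDensity_conv {M : Type*} [AddMonoid M] [MeasurableSpace M] [MeasurableAdd₂ M]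
    (μ ν : Measure M) [SFinite μ] [SFinite ν] {w : M → ℝ≥0∞} (hw : Measurable w)
    (hadd : ∀ x y, w (x + y) = w x + w y) :
    (μ ∗ ν).withDensity w = μ.withDensity w ∗ ν + μ ∗ ν.withDensity w := by
  have hsplit : w ∘ (fun z : M × M ↦ z.1 + z.2) = (fun z ↦ w z.1) + fun z ↦ w z.2 := by
    ext z; exact hadd z.1 z.2
  rw [conv, conv, conv, withDensity_map _ measurable_add hw, hsplit,
    withDensity_add_left (f := fun z : M × M ↦ w z.1) (hw.comp measurable_fst),
    ← prod_withDensity_left hw, ← prod_withDensity_right hw, Measure.map_add _ _ measurable_add]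

theorem prod_preimage_fst (μ : Measure α) (ν : Measure β) [IsProbabilityMeasure ν] (s : Set α) :
    μ.prod ν (Prod.fst ⁻¹' s) = μ s := by
  rw [← Set.prod_univ, prod_prod, measure_univ, mul_one]

theorem withDensity_natCast_apply_singleton (μ : Measure ℕ) (n : ℕ) :
    μ.withDensity (fun k ↦ (k : ℝ≥0∞)) {n} = n * μ {n} := by
  rw [withDensity_apply _ (.singleton n), lintegral_singleton]

theorem withDensity_natCast_smul_dirac_zero_add (a b : ℝ≥0∞) (μ : Measure ℕ) :
    (a • dirac 0 + b • μ).withDensity (fun k ↦ (k : ℝ≥0∞))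
      = b • μ.withDensity (fun k ↦ (k : ℝ≥0∞)) := by
  refine ext_of_singleton fun n ↦ ?_
  rcases eq_or_ne n 0 with rfl | hn <;> simp [*, mul_assoc]

end MeasureTheory.Measure

namespace ProbabilityTheory

section

variable {Ω : Type*} [MeasurableSpace Ω] {P : Measure Ω}

theorem ae_le_one_of_map_eq_bernoulli {ξ : Ω → ℕ} (hξ : Measurable ξ) {a b : ℝ≥0∞}
    (hlaw : P.map ξ = a • Measure.dirac 0 + b • Measure.dirac 1) : ∀ᵐ ω ∂P, ξ ω ≤ 1 := by
  have h := congrArg (fun μ : Measure ℕ ↦ μ (Set.Ioi 1)) hlaw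
  simp only [Measure.map_apply hξ measurableSet_Ioi, Measure.add_apply, Measure.smul_apply] at h
  rw [ae_iff]
  convert h using 2
  · ext; simp
  · simp

theorem withDensity_natCast_map_univ {X : Ω → ℕ} (hX : Measurable X)
    (hint : Integrable (fun ω ↦ (X ω : ℝ)) P) :
    (P.map X).withDensity (fun k ↦ (k : ℝ≥0∞)) Set.univ = ENNReal.ofReal (∫ ω, (X ω : ℝ) ∂P) := by
  rw [withDensity_apply _ .univ, setLIntegral_univ, lintegral_map (by fun_prop) hX,
    ofReal_integral_eq_lintegral_ofReal hint (ae_of_all _ fun _ ↦ Nat.cast_nonneg _)]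
  simp

variable [IsProbabilityMeasure P]

theorem map_eq_bernoulli {ξ : Ω → ℕ} (hξ : Measurable ξ) {q : ℝ} (hq0 : 0 ≤ q) (hq1 : q ≤ 1)
    (hξ1 : (P {ω | ξ ω = 1}).toReal = q) (hξ0 : (P {ω | ξ ω = 0}).toReal = 1 - q) :
    P.map ξ = ENNReal.ofReal (1 - q) • Measure.dirac 0 + ENNReal.ofReal q • Measure.dirac 1 := by
  have h0 : P (ξ ⁻¹' {0}) = ENNReal.ofReal (1 - q) := by
    rw [← hξ0, ENNReal.ofReal_toReal (measure_ne_top _ _)]; rfl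
  have h1 : P (ξ ⁻¹' {1}) = ENNReal.ofReal q := by
    rw [← hξ1, ENNReal.ofReal_toReal (measure_ne_top _ _)]; rfl
  have h01 : P (ξ ⁻¹' {0} ∪ ξ ⁻¹' {1}) = 1 := by
    rw [measure_union (Set.disjoint_left.mpr fun ω h h' ↦ by simp_all) (hξ (.singleton 1)),
      h0, h1, ← ENNReal.ofReal_add (by linarith) hq0, sub_add_cancel, ENNReal.ofReal_one]
  refine Measure.ext_of_singleton fun j ↦ ?_
  rw [Measure.map_apply hξ (.singleton j)]
  rcases j with _ | _ | j
  · simpa using h0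
  · simpa using h1
  · have hnull : P (ξ ⁻¹' {j + 2}) ≤ P (ξ ⁻¹' {0} ∪ ξ ⁻¹' {1})ᶜ :=
      measure_mono fun ω hω ↦ by simp_all
    rw [prob_compl_eq_one_sub ((hξ (.singleton 0)).union (hξ (.singleton 1))), h01,
      tsub_self, nonpos_iff_eq_zero] at hnull
    simp [hnull]

theorem IndepFun.prodMk_left_of_prodMk_right {α β γ : Type*} [MeasurableSpace α]
    [MeasurableSpace β] [MeasurableSpace γ] {ξ : Ω → α} {W : Ω → β} {X : Ω → γ}
    (hξ : Measurable ξ) (hW : Measurable W) (hX : Measurable X)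
    (hξWX : IndepFun ξ (fun ω ↦ (W ω, X ω)) P) (hWX : IndepFun W X P) :
    IndepFun (fun ω ↦ (ξ ω, W ω)) X P := by
  have hξW : P.map (fun ω ↦ (ξ ω, W ω)) = (P.map ξ).prod (P.map W) :=
    (indepFun_iff_map_prod_eq_prod_map_map hξ.aemeasurable hW.aemeasurable).mp
      (hξWX.comp measurable_id measurable_fst)
  have hassoc : P.map (fun ω ↦ ((ξ ω, W ω), X ω))
      = (P.map fun ω ↦ (ξ ω, (W ω, X ω))).map MeasurableEquiv.prodAssoc.symm := by
    rw [Measure.map_map MeasurableEquiv.prodAssoc.symm.measurable (hξ.prodMk (hW.prodMk hX))]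
    rfl
  rw [indepFun_iff_map_prod_eq_prod_map_map (hξ.prodMk hW).aemeasurable hX.aemeasurable, hassoc,
    (indepFun_iff_map_prod_eq_prod_map_map hξ.aemeasurable (hW.prodMk hX).aemeasurable).mp hξWX,
    (indepFun_iff_map_prod_eq_prod_map_map hW.aemeasurable hX.aemeasurable).mp hWX,
    (measurePreserving_prodAssoc _ _ _).symm.map_eq, hξW]

theorem IndepFun.map_mul_eq_of_map_eq_bernoulli {ξ W : Ω → ℕ} (hξ : Measurable ξ)
    (hW : Measurable W) (hind : IndepFun ξ W P) {a b : ℝ≥0∞}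
    (hlaw : P.map ξ = a • Measure.dirac 0 + b • Measure.dirac 1) :
    P.map (fun ω ↦ ξ ω * W ω) = a • Measure.dirac 0 + b • P.map W := by
  have := hind.map_mul_eq_map_mconv_map hξ hW
  rw [Pi.mul_def] at this
  rw [this, hlaw, Measure.add_mconv, Measure.mconv_smul_left, Measure.mconv_smul_left,
    Measure.dirac_one_mconv, Measure.dirac_mconv]
  simp [Measure.map_const, Measure.map_apply hW .univ]

theorem withDensity_natCast_map_eq_smul_map {W Ws : Ω → ℕ} (hW : Measurable W)
    (hWs : Measurable Ws) {ν : ℝ} (hν : 0 < ν)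
    (hsb : ∀ j : ℕ, (P {ω | Ws ω = j}).toReal = j * (P {ω | W ω = j}).toReal / ν) :
    (P.map W).withDensity (fun k ↦ (k : ℝ≥0∞)) = ENNReal.ofReal ν • P.map Ws := by
  refine Measure.ext_of_singleton fun j ↦ ?_
  rw [Measure.withDensity_natCast_apply_singleton, Measure.smul_apply,
    Measure.map_apply hW (.singleton j), Measure.map_apply hWs (.singleton j), smul_eq_mul,
    ← ENNReal.toReal_eq_toReal_iff' (by finiteness) (by finiteness), ENNReal.toReal_mul,
    ENNReal.toReal_mul, ENNReal.toReal_ofReal hν.le]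
  have := hsb j
  simp only [Set.preimage, Set.mem_singleton_iff, ENNReal.toReal_natCast] at this ⊢
  rw [this]
  field_simp

theorem withDensity_natCast_map_mul_bernoulli {ξ W Ws : Ω → ℕ} (hξ : Measurable ξ)
    (hW : Measurable W) (hWs : Measurable Ws) (hξW : IndepFun ξ W P) {q : ℝ} (hq : 0 ≤ q)
    (hlaw : P.map ξ = ENNReal.ofReal (1 - q) • Measure.dirac 0 + ENNReal.ofReal q • Measure.dirac 1)
    {ν : ℝ} (hν : 0 < ν)
    (hsb : ∀ j : ℕ, (P {ω | Ws ω = j}).toReal = j * (P {ω | W ω = j}).toReal / ν) :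
    (P.map fun ω ↦ ξ ω * W ω).withDensity (fun k ↦ (k : ℝ≥0∞))
      = ENNReal.ofReal (q * ν) • P.map Ws := by
  rw [hξW.map_mul_eq_of_map_eq_bernoulli hξ hW hlaw,
    Measure.withDensity_natCast_smul_dirac_zero_add,
    withDensity_natCast_map_eq_smul_map hW hWs hν hsb, smul_smul, ← ENNReal.ofReal_mul hq]

end

/- `biasChoice a ρ` chooses which summand of `U + V` is size-biased: `(0, true)` with weight `a`
(replace `U` by `Us`), and `(k, false)` with weight `ρ {k}` (replace `V` by `k`). -/
noncomputable def biasChoice (a : ℝ≥0∞) (ρ : Measure ℕ) : Measure (ℕ × Bool) :=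
  (a + ρ Set.univ)⁻¹ • (a • Measure.dirac (0, true) + ρ.map (·, false))

def biasedSum {Ω : Type*} (U Us V : Ω → ℕ) (z : Ω × ℕ × Bool) : ℕ :=
  if z.2.2 then Us z.1 + V z.1 else U z.1 + z.2.1

theorem measurable_biasedSum {Ω : Type*} [MeasurableSpace Ω] {U Us V : Ω → ℕ}
    (hU : Measurable U) (hUs : Measurable Us) (hV : Measurable V) :
    Measurable (biasedSum U Us V) :=
  Measurable.ite ((measurable_snd.comp measurable_snd) (measurableSet_singleton true))
    (by fun_prop) (by fun_prop)

theorem isProbabilityMeasure_biasChoice {a : ℝ≥0∞} {ρ : Measure ℕ} (h0 : a + ρ Set.univ ≠ 0)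
    (htop : a + ρ Set.univ ≠ ∞) : IsProbabilityMeasure (biasChoice a ρ) := by
  constructor
  rw [biasChoice, Measure.smul_apply, Measure.add_apply,
    Measure.map_apply (by fun_prop) .univ]
  simp [ENNReal.inv_mul_cancel h0 htop]

theorem biasChoice_singleton_true {a : ℝ≥0∞} {ρ : Measure ℕ} :
    biasChoice a ρ {(0, true)} = (a + ρ Set.univ)⁻¹ * a := by
  rw [biasChoice, Measure.smul_apply, Measure.add_apply,
    Measure.map_apply (by fun_prop) (.singleton _)]
  have : (fun k : ℕ ↦ (k, false)) ⁻¹' {(0, true)} = ∅ := by ext; simp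
  simp [this]

section

variable {Ω : Type*} [MeasurableSpace Ω] {P : Measure Ω}

theorem mul_measure_le_prod_biasedSum {W Z Ws X ξ : Ω → ℕ}
    (hmono : ∀ᵐ ω ∂P, (W ω : ℤ) + 1 - (Z ω : ℤ) ≤ (Ws ω : ℤ))
    (hξindep : IndepFun (fun ω ↦ (W ω, Z ω, Ws ω, X ω)) ξ P) (hξ : ∀ᵐ ω ∂P, ξ ω ≤ 1)
    (κ : Measure (ℕ × Bool)) [SFinite κ] (x : ℤ) :
    κ {(0, true)} * P {ω | ξ ω = 1} * P {ω | x ≤ ((ξ ω * W ω + X ω : ℕ) : ℤ) + 1 - Z ω}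
      ≤ P.prod κ {z | ((ξ z.1 * W z.1 + X z.1 : ℕ) : ℤ) + 1 - Z z.1
            ≤ biasedSum (fun ω ↦ ξ ω * W ω) Ws X z
          ∧ x ≤ ((ξ z.1 * W z.1 + X z.1 : ℕ) : ℤ) + 1 - Z z.1} := by
  set A := {ω | x ≤ (W ω : ℤ) + X ω + 1 - Z ω}
  have hthin : P {ω | x ≤ ((ξ ω * W ω + X ω : ℕ) : ℤ) + 1 - Z ω} ≤ P A := by
    refine measure_mono_ae ?_
    filter_upwards [hξ] with ω hω hx
    have hle : ((ξ ω * W ω + X ω : ℕ) : ℤ) ≤ W ω + X ω := by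
      exact_mod_cast Nat.add_le_add_right (mul_le_of_le_one_left (Nat.zero_le _) hω) _
    change x ≤ _ at hx ⊢
    linarith
  have hgood : P (A ∩ {ω | ξ ω = 1}) = P {ω | ξ ω = 1} * P A := by
    rw [mul_comm]
    exact hξindep.measure_inter_preimage_eq_mul
      {p : ℕ × ℕ × ℕ × ℕ | x ≤ (p.1 : ℤ) + p.2.2.2 + 1 - p.2.1} {1} .of_discrete .of_discrete
  set G := A ∩ {ω | ξ ω = 1} ∩ {ω | (W ω : ℤ) + 1 - Z ω ≤ Ws ω}
  have hconull : P G = P (A ∩ {ω | ξ ω = 1}) := measure_inter_conull (mem_ae_iff.mp hmono)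
  have hsub : G ×ˢ {((0 : ℕ), true)}
      ⊆ {z | ((ξ z.1 * W z.1 + X z.1 : ℕ) : ℤ) + 1 - Z z.1
            ≤ biasedSum (fun ω ↦ ξ ω * W ω) Ws X z
          ∧ x ≤ ((ξ z.1 * W z.1 + X z.1 : ℕ) : ℤ) + 1 - Z z.1} := by
    rintro ⟨ω, k, b⟩ ⟨⟨⟨hA, hξ1⟩, hm⟩, hkb⟩
    simp only [Set.mem_singleton_iff, Prod.mk.injEq] at hkb
    simp only [A, Set.mem_ofPred_eq] at hm hA hξ1 ⊢
    simp only [biasedSum, hkb, hξ1, if_true, one_mul]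
    push_cast
    omega
  calc κ {(0, true)} * P {ω | ξ ω = 1} * P {ω | x ≤ ((ξ ω * W ω + X ω : ℕ) : ℤ) + 1 - Z ω}
      ≤ κ {(0, true)} * P {ω | ξ ω = 1} * P A := by gcongr
    _ = P G * κ {(0, true)} := by rw [hconull, hgood]; ring
    _ = P.prod κ (G ×ˢ {(0, true)}) := (Measure.prod_prod _ _).symm
    _ ≤ _ := measure_mono hsub

variable [IsProbabilityMeasure P]

theorem map_biasedSum_prod_biasChoice {U Us V : Ω → ℕ} (hU : Measurable U) (hUs : Measurable Us)
    (hV : Measurable V) (hUV : IndepFun U V P) (hUsV : IndepFun Us V P) {a : ℝ≥0∞}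
    (hUUs : (P.map U).withDensity (fun k ↦ (k : ℝ≥0∞)) = a • P.map Us) :
    (P.prod (biasChoice a ((P.map V).withDensity (fun k ↦ (k : ℝ≥0∞))))).map (biasedSum U Us V)
      = (a + (P.map V).withDensity (fun k ↦ (k : ℝ≥0∞)) Set.univ)⁻¹
          • (P.map fun ω ↦ U ω + V ω).withDensity (fun k ↦ (k : ℝ≥0∞)) := by
  set ρ := (P.map V).withDensity (fun k ↦ (k : ℝ≥0∞))
  have hmeas := measurable_biasedSum hU hUs hV
  have hUsV_law : (P.prod (Measure.dirac ((0 : ℕ), true))).map (biasedSum U Us V)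
      = P.map (fun ω ↦ Us ω + V ω) := by
    rw [Measure.prod_dirac, Measure.map_map hmeas (by fun_prop)]
    rfl
  have hUρ_law : (P.prod (ρ.map (·, false))).map (biasedSum U Us V) = P.map U ∗ ρ := by
    have hUρ : (P.map U).prod ρ = (P.prod ρ).map (Prod.map U id) := by
      rw [← Measure.map_prod_map _ _ hU measurable_id, Measure.map_id]
    rw [← Measure.map_id (μ := P), Measure.map_prod_map _ _ measurable_id (by fun_prop),
      Measure.map_map hmeas (by fun_prop), Measure.map_id, Measure.conv, hUρ,
      Measure.map_map measurable_add (hU.prodMap measurable_id)]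
    rfl
  rw [biasChoice, Measure.prod_smul_right, Measure.prod_add, Measure.prod_smul_right,
    Measure.map_smul, Measure.map_add _ _ hmeas, Measure.map_smul, hUsV_law, hUρ_law,
    show P.map (fun ω ↦ U ω + V ω) = _ from hUV.map_add_eq_map_conv_map hU hV,
    Measure.withDensity_conv _ _ (by fun_prop) (fun x y ↦ by push_cast; rfl), hUUs,
    Measure.conv_smul_left, ← show P.map (fun ω ↦ Us ω + V ω) = _ from
      hUsV.map_add_eq_map_conv_map hUs hV]

theorem exists_prod_coupling_of_thinned_sum {W Z Ws X ξ : Ω → ℕ}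
    (hW : Measurable W) (hWs : Measurable Ws) (hX : Measurable X) (hξ : Measurable ξ)
    {ν : ℝ} (hν : 0 < ν) {φ : ℝ} (hφ : φ = ∫ ω, (X ω : ℝ) ∂P)
    (hXint : Integrable (fun ω ↦ (X ω : ℝ)) P)
    (hsb : ∀ j : ℕ, (P {ω | Ws ω = j}).toReal = j * (P {ω | W ω = j}).toReal / ν)
    (hmono : ∀ᵐ ω ∂P, (W ω : ℤ) + 1 - (Z ω : ℤ) ≤ (Ws ω : ℤ))
    (hXindep : IndepFun (fun ω ↦ (W ω, Z ω, Ws ω)) X P)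
    {q : ℝ} (hq0 : 0 < q) (hq1 : q ≤ 1)
    (hξ1 : (P {ω | ξ ω = 1}).toReal = q) (hξ0 : (P {ω | ξ ω = 0}).toReal = 1 - q)
    (hξindep : IndepFun (fun ω ↦ (W ω, Z ω, Ws ω, X ω)) ξ P) :
    ∃ κ : Measure (ℕ × Bool), IsProbabilityMeasure κ ∧
      (∀ j : ℕ, ((P.prod κ).map (biasedSum (fun ω ↦ ξ ω * W ω) Ws X) {j}).toReal
        = j * (P {ω | ξ ω * W ω + X ω = j}).toReal / (q * ν + φ)) ∧
      ∀ x : ℤ, q ^ 2 * ν / (q * ν + φ)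
          * (P {ω | x ≤ ((ξ ω * W ω + X ω : ℕ) : ℤ) + 1 - Z ω}).toReal
        ≤ (P.prod κ {z | ((ξ z.1 * W z.1 + X z.1 : ℕ) : ℤ) + 1 - Z z.1
              ≤ biasedSum (fun ω ↦ ξ ω * W ω) Ws X z
            ∧ x ≤ ((ξ z.1 * W z.1 + X z.1 : ℕ) : ℤ) + 1 - Z z.1}).toReal := by
  have hφ0 : 0 ≤ φ := hφ ▸ integral_nonneg fun ω ↦ Nat.cast_nonneg _
  have hc : 0 < q * ν + φ := by positivity
  have hlaw := map_eq_bernoulli hξ hq0.le hq1 hξ1 hξ0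
  have hnorm : ENNReal.ofReal (q * ν) + (P.map X).withDensity (fun k ↦ (k : ℝ≥0∞)) Set.univ
      = ENNReal.ofReal (q * ν + φ) := by
    rw [withDensity_natCast_map_univ hX hXint, ← hφ, ← ENNReal.ofReal_add (by positivity) hφ0]
  have hξWX : IndepFun (fun ω ↦ ξ ω * W ω) X P :=
    (IndepFun.prodMk_left_of_prodMk_right hξ hW hX
      (hξindep.comp (measurable_fst.prodMk (measurable_snd.comp (measurable_snd.comp
        measurable_snd))) measurable_id).symm
      (hXindep.comp measurable_fst measurable_id)).comp measurable_mul measurable_id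
  have hWsX : IndepFun Ws X P := hXindep.comp (measurable_snd.comp measurable_snd) measurable_id
  set κ := biasChoice (ENNReal.ofReal (q * ν)) ((P.map X).withDensity (fun k ↦ (k : ℝ≥0∞)))
  have hκ : IsProbabilityMeasure κ := isProbabilityMeasure_biasChoice
    (by rw [hnorm]; exact (ENNReal.ofReal_pos.mpr hc).ne')
    (by rw [hnorm]; exact ENNReal.ofReal_ne_top)
  have hκ_true : κ {(0, true)} = (ENNReal.ofReal (q * ν + φ))⁻¹ * ENNReal.ofReal (q * ν) := by
    rw [← hnorm]; exact biasChoice_singleton_true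
  refine ⟨κ, hκ, fun j ↦ ?_, fun x ↦ ?_⟩
  · rw [map_biasedSum_prod_biasChoice (by fun_prop) hWs hX hξWX hWsX
      (withDensity_natCast_map_mul_bernoulli hξ hW hWs (hξindep.comp measurable_fst
        measurable_id).symm hq0.le hlaw hν hsb), hnorm, Measure.smul_apply,
      Measure.withDensity_natCast_apply_singleton, Measure.map_apply (by fun_prop) (.singleton j),
      smul_eq_mul, ENNReal.toReal_mul, ENNReal.toReal_mul, ENNReal.toReal_inv,
      ENNReal.toReal_ofReal hc.le, ENNReal.toReal_natCast, div_eq_inv_mul]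
    rfl
  · refine le_trans (le_of_eq ?_) (ENNReal.toReal_mono (measure_ne_top _ _)
      (mul_measure_le_prod_biasedSum hmono hξindep (ae_le_one_of_map_eq_bernoulli hξ hlaw) _ x))
    rw [ENNReal.toReal_mul, ENNReal.toReal_mul, hκ_true, hξ1, ENNReal.toReal_mul,
      ENNReal.toReal_inv, ENNReal.toReal_ofReal hc.le, ENNReal.toReal_ofReal (by positivity)]
    field_simp

end

end ProbabilityTheory

theorem noise_contaminated_pos_dep_general
    {Ω : Type*} [MeasurableSpace Ω] (P : Measure Ω) [IsProbabilityMeasure P]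
    (W Z Ws X ξ : Ω → ℕ)
    (hWmeas : Measurable W) (hZmeas : Measurable Z) (hWsmeas : Measurable Ws)
    (hXmeas : Measurable X) (hξmeas : Measurable ξ)
    (ν : ℝ) (hνpos : 0 < ν)
    (φ : ℝ) (hφ : φ = ∫ ω, (X ω : ℝ) ∂P)
    (hXInt : Integrable (fun ω => (X ω : ℝ)) P)
    (hsbW : ∀ j : ℕ, (P {ω | Ws ω = j}).toReal = j * (P {ω | W ω = j}).toReal / ν)
    (hmono : ∀ᵐ ω ∂P, (W ω : ℤ) + 1 - (Z ω : ℤ) ≤ (Ws ω : ℤ))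
    (hXindep : IndepFun (fun ω => (W ω, Z ω, Ws ω)) X P)
    (q : ℝ) (hq0 : 0 < q) (hq1 : q ≤ 1)
    (hξ1 : (P {ω | ξ ω = 1}).toReal = q)
    (hξ0 : (P {ω | ξ ω = 0}).toReal = 1 - q)
    (hξindep : IndepFun (fun ω => (W ω, Z ω, Ws ω, X ω)) ξ P) :
    ∃ (Ω' : Type) (_ : MeasurableSpace Ω') (P' : Measure Ω') (Y' Ys Z' : Ω' → ℕ),
      IsProbabilityMeasure P' ∧ Measurable Y' ∧ Measurable Ys ∧ Measurable Z' ∧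
      (∀ j : ℕ, P' {ω | Y' ω = j} = P {ω | ξ ω * W ω + X ω = j}) ∧
      (∀ j : ℕ, (P' {ω | Ys ω = j}).toReal
        = j * (P {ω | ξ ω * W ω + X ω = j}).toReal / (q * ν + φ)) ∧
      (∀ j : ℕ, P' {ω | Z' ω = j} = P {ω | Z ω = j}) ∧
      (∀ x : ℤ, 0 < P' {ω | x ≤ (Y' ω : ℤ) + 1 - (Z' ω : ℤ)} →
        q ^ 2 * ν / (q * ν + φ)
          ≤ (P' {ω | (Y' ω : ℤ) + 1 - (Z' ω : ℤ) ≤ (Ys ω : ℤ)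
                ∧ x ≤ (Y' ω : ℤ) + 1 - (Z' ω : ℤ)}).toReal
              / (P' {ω | x ≤ (Y' ω : ℤ) + 1 - (Z' ω : ℤ)}).toReal) := by
  obtain ⟨κ, hκ, hYs, hbound⟩ := exists_prod_coupling_of_thinned_sum hWmeas hWsmeas hXmeas hξmeas
    hνpos hφ hXInt hsbW hmono hXindep hq0 hq1 hξ1 hξ0 hξindep
  -- `Ω'` must live in `Type`, so the coupling on `Ω × ℕ × Bool` is transported to `ℕ × ℕ × ℕ`.
  set Ys := biasedSum (fun ω ↦ ξ ω * W ω) Ws X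
  have hYsmeas : Measurable Ys := measurable_biasedSum (by fun_prop) hWsmeas hXmeas
  set T : Ω × ℕ × Bool → ℕ × ℕ × ℕ := fun z ↦ (ξ z.1 * W z.1 + X z.1, Ys z, Z z.1)
  have hT : Measurable T := by fun_prop
  refine ⟨ℕ × ℕ × ℕ, inferInstance, (P.prod κ).map T, Prod.fst, fun v ↦ v.2.1, fun v ↦ v.2.2,
    Measure.isProbabilityMeasure_map hT.aemeasurable, measurable_fst, by fun_prop, by fun_prop,
    fun j ↦ ?_, fun j ↦ ?_, fun j ↦ ?_, fun x hx ↦ ?_⟩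
  · rw [Measure.map_apply hT .of_discrete]
    exact Measure.prod_preimage_fst P κ {ω | ξ ω * W ω + X ω = j}
  · rw [Measure.map_apply hT .of_discrete]
    change ((P.prod κ) (Ys ⁻¹' {j})).toReal = _
    rw [← Measure.map_apply hYsmeas (.singleton j)]
    exact hYs j
  · rw [Measure.map_apply hT .of_discrete]
    exact Measure.prod_preimage_fst P κ {ω | Z ω = j}
  · rw [Measure.map_apply hT .of_discrete] at hx
    rw [Measure.map_apply hT .of_discrete, Measure.map_apply hT .of_discrete,
      le_div_iff₀ (ENNReal.toReal_pos hx.ne' (measure_ne_top _ _))]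
    have h := hbound x
    rwa [← Measure.prod_preimage_fst P κ {ω | x ≤ ((ξ ω * W ω + X ω : ℕ) : ℤ) + 1 - Z ω}] at h

/-- **Theorem 3 (noise-contaminated positively dependent models).**
Let `W` be non-negative integer-valued with mean `ν > 0`, admitting a joint construction
`(W, Z, Ws)` with `Ws` size-biased and `W + 1 − Z ≤ Ws` a.s.; let `X` be non-negative
integer-valued with mean `φ`, independent of `(W, Z, Ws)`; and let `ξ ~ Be(q)` be
independent of all else.  Set `Y = ξ·W + X`.  Then there are a coupling `(Y', Ys)` of `Y`
with its size-biased version and a random variable `Z'` distributed as `Z` such that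
`P(Ys ≥ Y' + 1 − Z' | Y' + 1 − Z' ≥ x) ≥ q²ν/(qν + φ)` for every `x` with positive
conditioning probability. -/
theorem noise_contaminated_pos_dep
    {Ω : Type*} [MeasurableSpace Ω] (P : Measure Ω) [IsProbabilityMeasure P]
    (W Z Ws X ξ : Ω → ℕ)
    (hWmeas : Measurable W) (hZmeas : Measurable Z) (hWsmeas : Measurable Ws)
    (hXmeas : Measurable X) (hξmeas : Measurable ξ)
    (ν : ℝ) (hν : ν = ∫ ω, (W ω : ℝ) ∂P) (hνpos : 0 < ν)
    (hWInt : Integrable (fun ω => (W ω : ℝ)) P)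
    (φ : ℝ) (hφ : φ = ∫ ω, (X ω : ℝ) ∂P)
    (hXInt : Integrable (fun ω => (X ω : ℝ)) P)
    (hsbW : ∀ j : ℕ, (P {ω | Ws ω = j}).toReal = j * (P {ω | W ω = j}).toReal / ν)
    (hmono : ∀ᵐ ω ∂P, (W ω : ℤ) + 1 - (Z ω : ℤ) ≤ (Ws ω : ℤ))
    (hXindep : IndepFun (fun ω => (W ω, Z ω, Ws ω)) X P)
    (q : ℝ) (hq0 : 0 < q) (hq1 : q ≤ 1)
    (hξ1 : (P {ω | ξ ω = 1}).toReal = q)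
    (hξ0 : (P {ω | ξ ω = 0}).toReal = 1 - q)
    (hξindep : IndepFun (fun ω => (W ω, Z ω, Ws ω, X ω)) ξ P) :
    ∃ (Ω' : Type) (_ : MeasurableSpace Ω') (P' : Measure Ω') (Y' Ys Z' : Ω' → ℕ),
      IsProbabilityMeasure P' ∧ Measurable Y' ∧ Measurable Ys ∧ Measurable Z' ∧
      (∀ j : ℕ, P' {ω | Y' ω = j} = P {ω | ξ ω * W ω + X ω = j}) ∧
      (∀ j : ℕ, (P' {ω | Ys ω = j}).toReal
        = j * (P {ω | ξ ω * W ω + X ω = j}).toReal / (q * ν + φ)) ∧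
      (∀ j : ℕ, P' {ω | Z' ω = j} = P {ω | Z ω = j}) ∧
      (∀ x : ℤ, 0 < P' {ω | x ≤ (Y' ω : ℤ) + 1 - (Z' ω : ℤ)} →
        q ^ 2 * ν / (q * ν + φ)
          ≤ (P' {ω | (Y' ω : ℤ) + 1 - (Z' ω : ℤ) ≤ (Ys ω : ℤ)
                ∧ x ≤ (Y' ω : ℤ) + 1 - (Z' ω : ℤ)}).toReal
              / (P' {ω | x ≤ (Y' ω : ℤ) + 1 - (Z' ω : ℤ)}).toReal) :=
  noise_contaminated_pos_dep_general P W Z Ws X ξ hWmeas hZmeas hWsmeas hXmeas hξmeas ν hνpos φ hφ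
    hXInt hsbW hmono hXindep q hq0 hq1 hξ1 hξ0 hξindep
end

section
/- Let Y be a non-negative integer-valued random variable with E[Y] = μ > 0 whose support is an initial segment of ℤ⁺ containing 0 (i.e. P(Y = k) > 0 whenever P(Y ≥ k) > 0). Suppose there exists c > 0 such that P(Y = k)/P(Y = k+1) − P(Y = k−1)/P(Y = k) ≥ c for all k ≥ 0 in the support (with the convention P(Y = −1) = 0). Then for every k ≥ 0, P(Y* ≥ k + 1) ≤ (1/(μc))·P(Y ≥ k), where Y* has the size-biased distribution of Y; equivalently, I_{μc}·Y* ≤_st Y + 1 for I_{μc} ~ Be(μc) independent of Y*. -/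
open MeasureTheory ProbabilityTheory
open scoped ENNReal

/-!
Summing the gap condition from `0` to `n` telescopes to `p n / p (n + 1) ≥ (n + 1) c`, where
`p n = P(Y = n)`; the initial-segment support keeps every ratio on the way defined. Since
`P(Y* = n + 1) = (n + 1) p (n + 1) / μ`, this is the pointwise bound
`P(Y* = n + 1) ≤ p n / (μ c)`, and summing it over `n ≥ k` gives the tail bound.
-/

/-- The `if` encodes the convention `p (-1) = 0`. -/
def IsLogConcaveWithGap (c : ℝ) (p : ℕ → ℝ) : Prop :=
  ∀ k, 0 < p k → 0 < p (k + 1) →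
    c ≤ p k / p (k + 1) - (if k = 0 then 0 else p (k - 1) / p k)

namespace IsLogConcaveWithGap

variable {p : ℕ → ℝ} {c : ℝ}

theorem succ_mul_le_div (hlc : IsLogConcaveWithGap c p)
    (hsupp : ∀ n, 0 < p (n + 1) → 0 < p n) :
    ∀ n, 0 < p (n + 1) → ((n : ℝ) + 1) * c ≤ p n / p (n + 1) := by
  intro n
  induction n with
  | zero =>
    intro h1
    simpa using hlc 0 (hsupp 0 h1) h1
  | succ n ih =>
    intro h2
    have h1 := hsupp (n + 1) h2
    have hstep := hlc (n + 1) h1 h2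
    simp only [Nat.add_one_ne_zero, if_false, Nat.add_sub_cancel] at hstep
    push_cast
    linarith [ih h1]

theorem succ_mul_mul_le (hlc : IsLogConcaveWithGap c p) (hp : ∀ n, 0 ≤ p n)
    (hsupp : ∀ n, 0 < p (n + 1) → 0 < p n) (n : ℕ) :
    ((n : ℝ) + 1) * c * p (n + 1) ≤ p n := by
  rcases (hp (n + 1)).eq_or_lt with hzero | hpos
  · rw [← hzero, mul_zero]
    exact hp n
  · exact (le_div_iff₀ hpos).mp (hlc.succ_mul_le_div hsupp n hpos)

end IsLogConcaveWithGap

theorem setOf_le_eq_iUnion {α : Type*} (X : α → ℕ) (k : ℕ) :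
    {a | k ≤ X a} = ⋃ j : ℕ, {a | X a = j + k} := by
  ext a
  simp only [Set.mem_ofPred_eq, Set.mem_iUnion]
  exact ⟨fun h => ⟨X a - k, by omega⟩, fun ⟨j, hj⟩ => by omega⟩

section Tail

variable {Ω Ω' : Type*} [MeasurableSpace Ω] [MeasurableSpace Ω']
  (P : Measure Ω) (Q : Measure Ω') (Y : Ω → ℕ) (Ys : Ω' → ℕ)

theorem measure_setOf_le_eq_tsum (hY : Measurable Y) (k : ℕ) :
    P {ω | k ≤ Y ω} = ∑' j : ℕ, P {ω | Y ω = j + k} := by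
  rw [setOf_le_eq_iUnion]
  refine measure_iUnion (fun i j hij => ?_) (fun j => hY (measurableSet_singleton _))
  simp only [Function.onFun, Set.disjoint_left, Set.mem_ofPred_eq]
  omega

theorem measure_setOf_succ_le_le_mul (hY : Measurable Y) {C : ℝ≥0∞}
    (h : ∀ j, Q {ω | Ys ω = j + 1} ≤ C * P {ω | Y ω = j}) (k : ℕ) :
    Q {ω | k + 1 ≤ Ys ω} ≤ C * P {ω | k ≤ Y ω} := by
  calc Q {ω | k + 1 ≤ Ys ω} ≤ ∑' j : ℕ, Q {ω | Ys ω = j + k + 1} := by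
        rw [setOf_le_eq_iUnion]
        exact measure_iUnion_le _
    _ ≤ ∑' j : ℕ, C * P {ω | Y ω = j + k} := ENNReal.tsum_le_tsum fun j => h (j + k)
    _ = C * P {ω | k ≤ Y ω} := by rw [ENNReal.tsum_mul_left, measure_setOf_le_eq_tsum P Y hY]

theorem measureReal_setOf_succ_le_le_mul [IsFiniteMeasure P] [IsFiniteMeasure Q]
    (hY : Measurable Y) {C : ℝ} (hC : 0 ≤ C)
    (h : ∀ j, Q.real {ω | Ys ω = j + 1} ≤ C * P.real {ω | Y ω = j}) (k : ℕ) :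
    Q.real {ω | k + 1 ≤ Ys ω} ≤ C * P.real {ω | k ≤ Y ω} := by
  have hofReal : ∀ s, ENNReal.ofReal C * P s = ENNReal.ofReal (C * P.real s) := fun s => by
    rw [ENNReal.ofReal_mul hC, measureReal_def, ENNReal.ofReal_toReal (measure_ne_top P s)]
  have hbound := measure_setOf_succ_le_le_mul P Q Y Ys hY (C := ENNReal.ofReal C) (fun j => by
    rw [hofReal, ENNReal.le_ofReal_iff_toReal_le (measure_ne_top Q _) (by positivity)]
    exact h j) k
  rwa [hofReal, ENNReal.le_ofReal_iff_toReal_le (measure_ne_top Q _) (by positivity)] at hbound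

end Tail

theorem c_log_concave_size_bias_tail_general
    {Ω Ω' : Type*} [MeasurableSpace Ω] [MeasurableSpace Ω']
    (P : Measure Ω) (Q : Measure Ω') [IsProbabilityMeasure P] [IsProbabilityMeasure Q]
    (Y : Ω → ℕ) (Ys : Ω' → ℕ) (hYmeas : Measurable Y)
    (μ : ℝ) (hμpos : 0 < μ)
    (hsb : ∀ j : ℕ, (Q {ω | Ys ω = j}).toReal = j * (P {ω | Y ω = j}).toReal / μ)
    (hsupp : ∀ k : ℕ, 0 < P {ω | k ≤ Y ω} → 0 < P {ω | Y ω = k})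
    (c : ℝ) (hc : 0 < c)
    (hlogconc : ∀ k : ℕ, 0 < P {ω | Y ω = k} → 0 < P {ω | Y ω = k + 1} →
      c ≤ (P {ω | Y ω = k}).toReal / (P {ω | Y ω = k + 1}).toReal
        - (if k = 0 then (0 : ℝ)
            else (P {ω | Y ω = k - 1}).toReal / (P {ω | Y ω = k}).toReal)) :
    ∀ k : ℕ, (Q {ω | k + 1 ≤ Ys ω}).toReal
      ≤ (1 / (μ * c)) * (P {ω | k ≤ Y ω}).toReal := by
  have hpos : ∀ n, 0 < P.real {ω | Y ω = n} ↔ 0 < P {ω | Y ω = n} := fun n => by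
    simp [measureReal_def, ENNReal.toReal_pos_iff, measure_lt_top]
  have hdecr : ∀ n, 0 < P.real {ω | Y ω = n + 1} → 0 < P.real {ω | Y ω = n} := fun n h1 => by
    refine (hpos n).2 (hsupp n ((hpos _).1 h1 |>.trans_le (measure_mono fun ω hω => ?_)))
    simp only [Set.mem_ofPred_eq] at hω ⊢
    omega
  have hlc : IsLogConcaveWithGap c fun n => P.real {ω | Y ω = n} :=
    fun k h0 h1 => hlogconc k ((hpos k).1 h0) ((hpos _).1 h1)
  have hratio := hlc.succ_mul_mul_le (fun n => measureReal_nonneg) hdecr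
  refine measureReal_setOf_succ_le_le_mul P Q Y Ys hYmeas (by positivity) fun j => ?_
  rw [measureReal_def, hsb, one_div_mul_eq_div, div_le_div_iff₀ hμpos (by positivity)]
  push_cast
  have hscaled := mul_le_mul_of_nonneg_right (hratio j) hμpos.le
  simp only [measureReal_def] at hscaled ⊢
  linarith

/-- **(Tail bound under `c`-log-concavity.)**
Let `Y` be non-negative integer-valued with mean `μ > 0`, whose support is an initial
segment of `ℤ⁺`, and suppose `P(Y=k)/P(Y=k+1) − P(Y=k−1)/P(Y=k) ≥ c > 0` for all `k` in
the support (with `P(Y=−1) = 0`).  Then for every `k ≥ 0`,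
`P(Y* ≥ k+1) ≤ (1/(μc))·P(Y ≥ k)`, where `Y*` is size-biased; equivalently
`I_{μc}·Y* ≤_st Y + 1`. -/
theorem c_log_concave_size_bias_tail
    {Ω Ω' : Type*} [MeasurableSpace Ω] [MeasurableSpace Ω']
    (P : Measure Ω) (Q : Measure Ω') [IsProbabilityMeasure P] [IsProbabilityMeasure Q]
    (Y : Ω → ℕ) (Ys : Ω' → ℕ) (hYmeas : Measurable Y) (hYsmeas : Measurable Ys)
    (μ : ℝ) (hμ : μ = ∫ ω, (Y ω : ℝ) ∂P) (hμpos : 0 < μ)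
    (hInt : Integrable (fun ω => (Y ω : ℝ)) P)
    (hsb : ∀ j : ℕ, (Q {ω | Ys ω = j}).toReal = j * (P {ω | Y ω = j}).toReal / μ)
    (hsupp : ∀ k : ℕ, 0 < P {ω | k ≤ Y ω} → 0 < P {ω | Y ω = k})
    (c : ℝ) (hc : 0 < c)
    (hlogconc : ∀ k : ℕ, 0 < P {ω | Y ω = k} → 0 < P {ω | Y ω = k + 1} →
      c ≤ (P {ω | Y ω = k}).toReal / (P {ω | Y ω = k + 1}).toReal
        - (if k = 0 then (0 : ℝ)
            else (P {ω | Y ω = k - 1}).toReal / (P {ω | Y ω = k}).toReal)) :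
    ∀ k : ℕ, (Q {ω | k + 1 ≤ Ys ω}).toReal
      ≤ (1 / (μ * c)) * (P {ω | k ≤ Y ω}).toReal :=
  c_log_concave_size_bias_tail_general P Q Y Ys hYmeas μ hμpos hsb hsupp c hc hlogconc
end

section
/- Let λ > 0 and p ∈ (0,1], let Z ~ Po(λ) and I_p ~ Be(p) be independent, and set Y = I_p·Z. Then the discrete Poincaré constant satisfies R_Y ≤ λ·( p + (1 − p)·max{ (e^λ − 1)/λ , e^λ/((1 − p)·e^λ + p) } ). -/
/-!
For a probability weight `w` on `ℕ` with mean `m` and `g` centred under `w`,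
`2 ∑ w g² = ∑_{j,k} w_j w_k (g_j - g_k)²`, and Cauchy–Schwarz along the path `j, j+1, …, k` gives
`(g_k - g_j)² ≤ (k - j) ∑_{j ≤ i < k} (Δg_i)²`. Exchanging the sums, the increment `Δg_i` is
charged `∑_{j ≤ i < k} w_j w_k (k - j) = E[(W - m); W > i]`, so `∑ w g² ≤ R ∑ w (Δg)²` as soon as
`E[(W - m); W > i] ≤ R w_i` for every `i`.

For `w = (1 - p) δ₀ + p Po(λ)`, the law of `I Z`, one finds `m = pλ` and
`E[(W - m); W > i] = pλ (μ_i + (1 - p) T_i)`, where `μ` is the Poisson weight and `T_i` its tail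
beyond `i`. At `i = 0` this equals `pλ w₀`; for `i ≥ 1` the bound `i! (n + 2)! ≤ (n + i + 1)!`
gives `λ T_i ≤ μ_i (e^λ - 1 - λ)`. Both cases give `R = pλ + (1 - p)(e^λ - 1)`, which is at most
the stated constant.
-/

open MeasureTheory ProbabilityTheory Finset Nat
open scoped ENNReal

namespace DiscretePoincare

variable {w g : ℕ → ℝ}

lemma hasSum_prod_mul {f h : ℕ → ℝ} {s t : ℝ} (hf : HasSum f s) (hh : HasSum h t) :
    HasSum (fun jk : ℕ × ℕ ↦ f jk.1 * h jk.2) (s * t) :=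
  hf.mul hh (summable_mul_of_summable_norm (summable_abs_iff.2 hf.summable)
    (summable_abs_iff.2 hh.summable))

lemma hasSum_mul_sq_sub_sq (hw : HasSum w 1) (hg2 : Summable fun n ↦ w n * g n ^ 2)
    (hg : HasSum (fun n ↦ w n * g n) 0) :
    HasSum (fun jk : ℕ × ℕ ↦ w jk.1 * w jk.2 * (g jk.1 - g jk.2) ^ 2)
      (2 * ∑' n, w n * g n ^ 2) := by
  have h := ((hasSum_prod_mul hg2.hasSum hw).add (hasSum_prod_mul hw hg2.hasSum)).sub
    ((hasSum_prod_mul hg hg).mul_left 2)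
  rw [mul_one, one_mul, mul_zero, mul_zero, sub_zero, ← two_mul] at h
  exact h.congr_fun fun jk ↦ by ring

lemma sq_sub_le_mul_sum_sq_sub (g : ℕ → ℝ) {j k : ℕ} (hjk : j ≤ k) :
    (g k - g j) ^ 2 ≤ ((k : ℝ) - j) * ∑ i ∈ Ico j k, (g (i + 1) - g i) ^ 2 := by
  rw [← Finset.sum_Ico_sub g hjk, ← Nat.cast_sub hjk, ← Nat.card_Ico]
  exact sq_sum_le_card_mul_sum_sq

-- The share of the increment `g (i + 1) - g i` in the Cauchy–Schwarz bound for the pair `(j, k)`.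
def pairWeight (w : ℕ → ℝ) (i : ℕ) (jk : ℕ × ℕ) : ℝ :=
  if jk.1 ≤ i ∧ i < jk.2 then w jk.1 * w jk.2 * (jk.2 - jk.1) else 0

lemma pairWeight_nonneg (hw0 : ∀ n, 0 ≤ w n) (i : ℕ) (jk : ℕ × ℕ) : 0 ≤ pairWeight w i jk := by
  unfold pairWeight
  split_ifs with h
  · have : (jk.1 : ℝ) ≤ jk.2 := by exact_mod_cast h.1.trans h.2.le
    exact mul_nonneg (mul_nonneg (hw0 _) (hw0 _)) (sub_nonneg.2 this)
  · exact le_rfl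

lemma ofReal_mul_sq_sub_le_tsum_pairWeight (hw0 : ∀ n, 0 ≤ w n) {j k : ℕ} (hjk : j ≤ k) :
    ENNReal.ofReal (w j * w k * (g j - g k) ^ 2)
      ≤ ∑' i, ENNReal.ofReal (pairWeight w i (j, k)) * ENNReal.ofReal ((g (i + 1) - g i) ^ 2) := by
  have hpw : ∀ i ∈ Ico j k, pairWeight w i (j, k) = w j * w k * (k - j) := fun i hi ↦
    if_pos (mem_Ico.1 hi)
  calc ENNReal.ofReal (w j * w k * (g j - g k) ^ 2)
      ≤ ENNReal.ofReal (∑ i ∈ Ico j k, pairWeight w i (j, k) * (g (i + 1) - g i) ^ 2) := by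
        gcongr
        rw [sum_congr rfl fun i hi ↦ by rw [hpw i hi], ← mul_sum, sub_sq_comm,
          mul_assoc (w j * w k)]
        exact mul_le_mul_of_nonneg_left (sq_sub_le_mul_sum_sq_sub g hjk)
          (mul_nonneg (hw0 j) (hw0 k))
    _ = ∑ i ∈ Ico j k,
          ENNReal.ofReal (pairWeight w i (j, k)) * ENNReal.ofReal ((g (i + 1) - g i) ^ 2) := by
        rw [ENNReal.ofReal_sum_of_nonneg fun i _ ↦
          mul_nonneg (pairWeight_nonneg hw0 _ _) (sq_nonneg _)]
        exact sum_congr rfl fun i _ ↦ ENNReal.ofReal_mul (pairWeight_nonneg hw0 _ _)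
    _ ≤ _ := ENNReal.sum_le_tsum _

lemma ofReal_mul_sq_sub_le_tsum_pairWeight_add_swap (hw0 : ∀ n, 0 ≤ w n) (jk : ℕ × ℕ) :
    ENNReal.ofReal (w jk.1 * w jk.2 * (g jk.1 - g jk.2) ^ 2)
      ≤ ∑' i, (ENNReal.ofReal (pairWeight w i jk) + ENNReal.ofReal (pairWeight w i jk.swap))
          * ENNReal.ofReal ((g (i + 1) - g i) ^ 2) := by
  obtain ⟨j, k⟩ := jk
  rcases le_total j k with hjk | hkj
  · exact (ofReal_mul_sq_sub_le_tsum_pairWeight hw0 hjk).trans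
      (ENNReal.tsum_le_tsum fun i ↦ by gcongr; exact le_self_add)
  · rw [mul_comm (w j), sub_sq_comm]
    exact (ofReal_mul_sq_sub_le_tsum_pairWeight hw0 hkj).trans
      (ENNReal.tsum_le_tsum fun i ↦ by gcongr; exact le_add_self)

theorem tsum_ofReal_mul_sq_le_of_pairWeight {R : ℝ} (hw0 : ∀ n, 0 ≤ w n) (hw : HasSum w 1)
    (hg2 : Summable fun n ↦ w n * g n ^ 2) (hg : HasSum (fun n ↦ w n * g n) 0)
    (hR : ∀ i, ∑' jk, ENNReal.ofReal (pairWeight w i jk) ≤ ENNReal.ofReal (R * w i)) :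
    ∑' n, ENNReal.ofReal (w n * g n ^ 2)
      ≤ ENNReal.ofReal R * ∑' n, ENNReal.ofReal (w n * (g (n + 1) - g n) ^ 2) := by
  have hvar := hasSum_mul_sq_sub_sq hw hg2 hg
  have hswap : ∀ i, ∑' jk : ℕ × ℕ, ENNReal.ofReal (pairWeight w i jk.swap)
      = ∑' jk, ENNReal.ofReal (pairWeight w i jk) := fun i ↦
    (Equiv.prodComm ℕ ℕ).tsum_eq fun jk ↦ ENNReal.ofReal (pairWeight w i jk)
  refine (ENNReal.mul_le_mul_iff_right two_ne_zero ENNReal.ofNat_ne_top).1 ?_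
  calc 2 * ∑' n, ENNReal.ofReal (w n * g n ^ 2)
      = ∑' jk : ℕ × ℕ, ENNReal.ofReal (w jk.1 * w jk.2 * (g jk.1 - g jk.2) ^ 2) := by
        rw [← ENNReal.ofReal_tsum_of_nonneg (fun n ↦ mul_nonneg (hw0 n) (sq_nonneg _)) hg2,
          ← ENNReal.ofReal_tsum_of_nonneg
            (fun jk ↦ mul_nonneg (mul_nonneg (hw0 _) (hw0 _)) (sq_nonneg _)) hvar.summable,
          hvar.tsum_eq, ENNReal.ofReal_mul zero_le_two, ENNReal.ofReal_ofNat]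
    _ ≤ ∑' jk : ℕ × ℕ, ∑' i, (ENNReal.ofReal (pairWeight w i jk)
          + ENNReal.ofReal (pairWeight w i jk.swap)) * ENNReal.ofReal ((g (i + 1) - g i) ^ 2) :=
        ENNReal.tsum_le_tsum (ofReal_mul_sq_sub_le_tsum_pairWeight_add_swap hw0)
    _ = ∑' i, (∑' jk : ℕ × ℕ, (ENNReal.ofReal (pairWeight w i jk)
          + ENNReal.ofReal (pairWeight w i jk.swap))) * ENNReal.ofReal ((g (i + 1) - g i) ^ 2) := by
        rw [ENNReal.tsum_comm]
        simp_rw [ENNReal.tsum_mul_right]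
    _ ≤ ∑' i, 2 * ENNReal.ofReal (R * w i) * ENNReal.ofReal ((g (i + 1) - g i) ^ 2) := by
        gcongr with i
        rw [ENNReal.tsum_add, hswap, ← two_mul]
        gcongr
        exact hR i
    _ = 2 * (ENNReal.ofReal R * ∑' n, ENNReal.ofReal (w n * (g (n + 1) - g n) ^ 2)) := by
        rw [← ENNReal.tsum_mul_left, ← ENNReal.tsum_mul_left]
        congr 1 with i
        rw [ENNReal.ofReal_mul' (hw0 i), ENNReal.ofReal_mul (hw0 i)]
        ring

-- `E[(W - m); W > i]` for `W ∼ w`; divided by `w i` it is the Stein kernel of `w`.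
noncomputable def tailCov (w : ℕ → ℝ) (m : ℝ) (i : ℕ) : ℝ :=
  ∑' n, (((n + (i + 1) : ℕ) : ℝ) - m) * w (n + (i + 1))

variable {m : ℝ}

lemma summable_pairWeight (hw0 : ∀ n, 0 ≤ w n) (hw : HasSum w 1)
    (hm : HasSum (fun n ↦ n * w n) m) (i : ℕ) : Summable (pairWeight w i) := by
  refine (hasSum_prod_mul hw hm).summable.of_nonneg_of_le (pairWeight_nonneg hw0 i) fun jk ↦ ?_
  unfold pairWeight
  split_ifs
  · have : 0 ≤ w jk.1 * w jk.2 * jk.1 := mul_nonneg (mul_nonneg (hw0 _) (hw0 _)) jk.1.cast_nonneg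
    nlinarith
  · exact mul_nonneg (hw0 _) (mul_nonneg jk.2.cast_nonneg (hw0 _))

lemma tsum_pairWeight_slice (hw0 : ∀ n, 0 ≤ w n) (hw : HasSum w 1)
    (hm : HasSum (fun n ↦ n * w n) m) {i j : ℕ} (hji : j ≤ i) :
    ∑' k, pairWeight w i (j, k) = w j * (∑' n, ((n + (i + 1) : ℕ) : ℝ) * w (n + (i + 1))
      - j * ∑' n, w (n + (i + 1))) := by
  have hslice := (summable_pairWeight hw0 hw hm i).prod_factor j
  have hhead : ∑ k ∈ range (i + 1), pairWeight w i (j, k) = 0 := sum_eq_zero fun k hk ↦ by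
    rw [pairWeight, if_neg]
    simp only [mem_range] at hk
    omega
  have htail : ∀ n, pairWeight w i (j, n + (i + 1))
      = w j * (((n + (i + 1) : ℕ) : ℝ) * w (n + (i + 1))) - w j * (j * w (n + (i + 1))) :=
    fun n ↦ by
    rw [pairWeight, if_pos ⟨hji, by omega⟩]
    ring
  have hwTail := (summable_nat_add_iff (i + 1)).2 hw.summable
  have hmTail := (summable_nat_add_iff (i + 1)).2 hm.summable
  rw [← hslice.sum_add_tsum_nat_add (i + 1), hhead, zero_add, tsum_congr htail,
    Summable.tsum_sub (hmTail.mul_left _) ((hwTail.mul_left _).mul_left _),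
    tsum_mul_left, tsum_mul_left, tsum_mul_left, mul_sub]

lemma tsum_pairWeight (hw0 : ∀ n, 0 ≤ w n) (hw : HasSum w 1)
    (hm : HasSum (fun n ↦ n * w n) m) (i : ℕ) : ∑' jk, pairWeight w i jk = tailCov w m i := by
  set S := ∑' n, ((n + (i + 1) : ℕ) : ℝ) * w (n + (i + 1))
  set T := ∑' n, w (n + (i + 1))
  have hT : ∑ j ∈ range (i + 1), w j = 1 - T := by
    rw [← hw.tsum_eq, ← hw.summable.sum_add_tsum_nat_add (i + 1)]
    ring
  have hS : ∑ j ∈ range (i + 1), (j : ℝ) * w j = m - S := by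
    rw [← hm.tsum_eq, ← hm.summable.sum_add_tsum_nat_add (i + 1)]
    ring
  have hpw := summable_pairWeight hw0 hw hm i
  have hwTail := (summable_nat_add_iff (i + 1)).2 hw.summable
  have hmTail := (summable_nat_add_iff (i + 1)).2 hm.summable
  have hvanish : ∀ j ∉ range (i + 1), ∑' k, pairWeight w i (j, k) = 0 := fun j hj ↦ by
    simp only [mem_range, not_lt] at hj
    exact (tsum_congr fun k ↦ by rw [pairWeight, if_neg (by omega)]).trans tsum_zero
  have hcov : tailCov w m i = S - m * T := by
    rw [tailCov, ← tsum_mul_left, ← Summable.tsum_sub hmTail (hwTail.mul_left m)]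
    exact tsum_congr fun n ↦ sub_mul _ _ _
  rw [hpw.tsum_prod' hpw.prod_factor, tsum_eq_sum hvanish, hcov,
    sum_congr rfl fun j hj ↦ tsum_pairWeight_slice hw0 hw hm (Nat.lt_succ_iff.1 (mem_range.1 hj))]
  have hexpand : ∀ j : ℕ, w j * (S - j * T) = S * w j - T * (j * w j) := fun j ↦ by ring
  rw [sum_congr rfl fun j _ ↦ hexpand j, sum_sub_distrib, ← mul_sum, ← mul_sum, hT, hS]
  ring

theorem tsum_ofReal_mul_sq_le_of_tailCov_le {R : ℝ} (hw0 : ∀ n, 0 ≤ w n) (hw : HasSum w 1)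
    (hm : HasSum (fun n ↦ n * w n) m) (hg2 : Summable fun n ↦ w n * g n ^ 2)
    (hg : HasSum (fun n ↦ w n * g n) 0) (hR : ∀ i, tailCov w m i ≤ R * w i) :
    ∑' n, ENNReal.ofReal (w n * g n ^ 2)
      ≤ ENNReal.ofReal R * ∑' n, ENNReal.ofReal (w n * (g (n + 1) - g n) ^ 2) := by
  refine tsum_ofReal_mul_sq_le_of_pairWeight hw0 hw hg2 hg fun i ↦ ?_
  rw [← ENNReal.ofReal_tsum_of_nonneg (pairWeight_nonneg hw0 i) (summable_pairWeight hw0 hw hm i),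
    tsum_pairWeight hw0 hw hm i]
  exact ENNReal.ofReal_le_ofReal (hR i)

section Transfer

variable {Ω : Type*} [MeasurableSpace Ω] {P : Measure Ω} {Y : Ω → ℕ}

lemma lintegral_ofReal_comp_eq_tsum (hY : Measurable Y) (hw0 : ∀ n, 0 ≤ w n)
    (hlaw : ∀ n, P (Y ⁻¹' {n}) = ENNReal.ofReal (w n)) (f : ℕ → ℝ) :
    ∫⁻ ω, ENNReal.ofReal (f (Y ω)) ∂P = ∑' n, ENNReal.ofReal (w n * f n) := by
  rw [← lintegral_map (f := fun n ↦ ENNReal.ofReal (f n)) Measurable.of_discrete hY,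
    lintegral_countable']
  refine tsum_congr fun n ↦ ?_
  rw [Measure.map_apply hY (measurableSet_singleton n), hlaw, ENNReal.ofReal_mul (hw0 n), mul_comm]

lemma hasSum_mul_integral_comp (hY : Measurable Y) (hw0 : ∀ n, 0 ≤ w n)
    (hlaw : ∀ n, P (Y ⁻¹' {n}) = ENNReal.ofReal (w n)) {g : ℕ → ℝ}
    (hg : Integrable (fun ω ↦ g (Y ω)) P) :
    HasSum (fun n ↦ w n * g n) (∫ ω, g (Y ω) ∂P) := by
  have hgY : Integrable g (P.map Y) :=
    (integrable_map_measure Measurable.of_discrete.aestronglyMeasurable hY.aemeasurable).2 hg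
  rw [← integral_map hY.aemeasurable Measurable.of_discrete.aestronglyMeasurable,
    ← Measure.sum_smul_dirac (P.map Y)]
  rw [← Measure.sum_smul_dirac (P.map Y)] at hgY
  simpa [integral_smul_measure, Measure.map_apply hY (measurableSet_singleton _), hlaw, hw0]
    using hasSum_integral_measure hgY

lemma summable_mul_of_lintegral_lt_top (hY : Measurable Y) (hw0 : ∀ n, 0 ≤ w n)
    (hlaw : ∀ n, P (Y ⁻¹' {n}) = ENNReal.ofReal (w n)) {f : ℕ → ℝ} (hf : ∀ n, 0 ≤ f n)
    (hfin : ∫⁻ ω, ENNReal.ofReal (f (Y ω)) ∂P < ∞) : Summable fun n ↦ w n * f n := by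
  rw [lintegral_ofReal_comp_eq_tsum hY hw0 hlaw] at hfin
  exact (ENNReal.summable_toReal hfin.ne).congr fun n ↦
    ENNReal.toReal_ofReal (mul_nonneg (hw0 n) (hf n))

end Transfer

end DiscretePoincare

namespace ZeroInflatedPoisson

open DiscretePoincare

noncomputable def poissonWeight (lam : ℝ) (k : ℕ) : ℝ := Real.exp (-lam) * lam ^ k / k !

noncomputable def poissonTail (lam : ℝ) (i : ℕ) : ℝ := ∑' n, poissonWeight lam (n + (i + 1))

variable {lam : ℝ}

lemma poissonWeight_nonneg (hlam : 0 ≤ lam) (k : ℕ) : 0 ≤ poissonWeight lam k := by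
  unfold poissonWeight
  positivity

lemma hasSum_pow_div_factorial (x : ℝ) : HasSum (fun n ↦ x ^ n / n !) (Real.exp x) :=
  Real.exp_eq_exp_ℝ ▸ NormedSpace.expSeries_div_hasSum_exp x

lemma hasSum_poissonWeight (lam : ℝ) : HasSum (poissonWeight lam) 1 := by
  have := (hasSum_pow_div_factorial lam).mul_left (Real.exp (-lam))
  rw [← Real.exp_add, neg_add_cancel, Real.exp_zero] at this
  exact this.congr_fun fun k ↦ mul_div_assoc _ _ _

lemma succ_mul_poissonWeight_succ (lam : ℝ) (k : ℕ) :
    ((k + 1 : ℕ) : ℝ) * poissonWeight lam (k + 1) = lam * poissonWeight lam k := by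
  unfold poissonWeight
  rw [factorial_succ]
  push_cast
  field_simp
  ring

lemma hasSum_mul_poissonWeight (lam : ℝ) : HasSum (fun k ↦ k * poissonWeight lam k) lam := by
  rw [← hasSum_nat_add_iff' 1]
  simp only [succ_mul_poissonWeight_succ]
  simpa using (hasSum_poissonWeight lam).mul_left lam

lemma tsum_mul_poissonWeight_tail (lam : ℝ) (i : ℕ) :
    ∑' n, ((n + (i + 1) : ℕ) : ℝ) * poissonWeight lam (n + (i + 1))
      = lam * (poissonWeight lam i + poissonTail lam i) := by
  have hshift := ((summable_nat_add_iff i).2 (hasSum_poissonWeight lam).summable).tsum_eq_zero_add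
  calc ∑' n, ((n + (i + 1) : ℕ) : ℝ) * poissonWeight lam (n + (i + 1))
      = ∑' n, lam * poissonWeight lam (n + i) :=
        tsum_congr fun n ↦ by rw [← add_assoc]; exact succ_mul_poissonWeight_succ lam (n + i)
    _ = lam * (poissonWeight lam i + poissonTail lam i) := by
        rw [tsum_mul_left, hshift, zero_add, poissonTail]
        simp only [add_right_comm _ 1 i, add_assoc]

lemma factorial_mul_factorial_le (n : ℕ) {i : ℕ} (hi : 1 ≤ i) :
    i ! * (n + 2)! ≤ (n + (i + 1))! := by
  induction i, hi using Nat.le_induction with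
  | base => simp
  | succ i _ ih =>
    calc (i + 1)! * (n + 2)! = (i + 1) * (i ! * (n + 2)!) := by rw [factorial_succ, mul_assoc]
      _ ≤ (n + (i + 1) + 1) * (n + (i + 1))! := Nat.mul_le_mul (by omega) ih
      _ = (n + (i + 1 + 1))! := by rw [← factorial_succ, add_assoc]

lemma mul_poissonTail_le (hlam : 0 ≤ lam) {i : ℕ} (hi : 1 ≤ i) :
    lam * poissonTail lam i ≤ poissonWeight lam i * (Real.exp lam - 1 - lam) := by
  have hexp : HasSum (fun n ↦ lam ^ (n + 2) / (n + 2)!) (Real.exp lam - 1 - lam) := by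
    have := (hasSum_nat_add_iff' 2).2 (hasSum_pow_div_factorial lam)
    simpa [sum_range_succ, sub_sub] using this
  have hterm : ∀ n, lam * poissonWeight lam (n + (i + 1))
      ≤ poissonWeight lam i * (lam ^ (n + 2) / (n + 2)!) := fun n ↦ by
    have hfact : ((i ! * (n + 2)! : ℕ) : ℝ) ≤ (n + (i + 1))! := by
      exact_mod_cast factorial_mul_factorial_le n hi
    calc lam * poissonWeight lam (n + (i + 1))
        = Real.exp (-lam) * lam ^ (i + (n + 2)) / (n + (i + 1))! := by
          rw [poissonWeight, show i + (n + 2) = n + (i + 1) + 1 by ring]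
          ring
      _ ≤ Real.exp (-lam) * lam ^ (i + (n + 2)) / (i ! * (n + 2)! : ℕ) := by
          gcongr
      _ = poissonWeight lam i * (lam ^ (n + 2) / (n + 2)!) := by
          rw [poissonWeight, pow_add]
          push_cast
          ring
  rw [poissonTail, ← tsum_mul_left, ← hexp.tsum_eq, ← tsum_mul_left]
  exact ((summable_nat_add_iff (i + 1)).2 (hasSum_poissonWeight lam).summable).mul_left lam
    |>.tsum_le_tsum hterm (hexp.summable.mul_left _)

noncomputable def zipWeight (lam p : ℝ) (k : ℕ) : ℝ :=
  (if k = 0 then 1 - p else 0) + p * poissonWeight lam k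

variable {p : ℝ}

lemma zipWeight_nonneg (hlam : 0 ≤ lam) (hp0 : 0 ≤ p) (hp1 : p ≤ 1) (k : ℕ) :
    0 ≤ zipWeight lam p k := by
  have := mul_nonneg hp0 (poissonWeight_nonneg hlam k)
  unfold zipWeight
  split_ifs <;> linarith

lemma zipWeight_succ (k : ℕ) : zipWeight lam p (k + 1) = p * poissonWeight lam (k + 1) := by
  simp [zipWeight]

lemma hasSum_zipWeight (lam p : ℝ) : HasSum (zipWeight lam p) 1 := by
  have := (hasSum_ite_eq 0 (1 - p)).add ((hasSum_poissonWeight lam).mul_left p)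
  rwa [mul_one, sub_add_cancel] at this

lemma hasSum_mul_zipWeight (lam p : ℝ) : HasSum (fun k ↦ k * zipWeight lam p k) (p * lam) := by
  refine ((hasSum_mul_poissonWeight lam).mul_left p).congr_fun fun k ↦ ?_
  rcases k with _ | k
  · simp
  · rw [zipWeight_succ]
    ring

lemma tailCov_zipWeight (lam p : ℝ) (i : ℕ) :
    tailCov (zipWeight lam p) (p * lam) i
      = p * lam * (poissonWeight lam i + (1 - p) * poissonTail lam i) := by
  have hwTail := (summable_nat_add_iff (i + 1)).2 (hasSum_poissonWeight lam).summable
  have hmTail := (summable_nat_add_iff (i + 1)).2 (hasSum_mul_poissonWeight lam).summable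
  calc tailCov (zipWeight lam p) (p * lam) i
      = ∑' n, (p * (((n + (i + 1) : ℕ) : ℝ) * poissonWeight lam (n + (i + 1)))
          - p * lam * p * poissonWeight lam (n + (i + 1))) :=
        tsum_congr fun n ↦ by rw [← add_assoc, zipWeight_succ]; ring
    _ = p * lam * (poissonWeight lam i + (1 - p) * poissonTail lam i) := by
        rw [Summable.tsum_sub (hmTail.mul_left p) (hwTail.mul_left _), tsum_mul_left,
          tsum_mul_left, tsum_mul_poissonWeight_tail, ← poissonTail]
        ring

lemma tailCov_zipWeight_le (hlam : 0 ≤ lam) (hp0 : 0 ≤ p) (hp1 : p ≤ 1) (i : ℕ) :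
    tailCov (zipWeight lam p) (p * lam) i
      ≤ (p * lam + (1 - p) * (Real.exp lam - 1)) * zipWeight lam p i := by
  rw [tailCov_zipWeight]
  have hgap := mul_nonneg (sub_nonneg.2 hp1) (sub_nonneg.2 (Real.one_le_exp hlam))
  rcases i with _ | k
  · have hT0 : poissonTail lam 0 = 1 - poissonWeight lam 0 := by
      have := (hasSum_poissonWeight lam).summable.tsum_eq_zero_add
      rw [(hasSum_poissonWeight lam).tsum_eq] at this
      simp only [poissonTail, zero_add] at this ⊢
      linarith
    have hz0 : zipWeight lam p 0 = 1 - p + p * poissonWeight lam 0 := by simp [zipWeight]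
    calc p * lam * (poissonWeight lam 0 + (1 - p) * poissonTail lam 0)
        = p * lam * zipWeight lam p 0 := by rw [hT0, hz0]; ring
      _ ≤ _ := by
        rw [add_mul]
        exact le_add_of_nonneg_right (mul_nonneg hgap (zipWeight_nonneg hlam hp0 hp1 0))
  · have hTail := mul_poissonTail_le hlam (Nat.le_add_left 1 k)
    calc p * lam * (poissonWeight lam (k + 1) + (1 - p) * poissonTail lam (k + 1))
        = p * (lam * poissonWeight lam (k + 1) + (1 - p) * (lam * poissonTail lam (k + 1))) := by
          ring
      _ ≤ p * (lam * poissonWeight lam (k + 1)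
            + (1 - p) * (poissonWeight lam (k + 1) * (Real.exp lam - 1 - lam))) := by
          gcongr
      _ = _ := by
          rw [zipWeight_succ]
          ring

lemma add_mul_exp_sub_one_le_mul_max (hlam : 0 < lam) (hp1 : p ≤ 1) (b : ℝ) :
    p * lam + (1 - p) * (Real.exp lam - 1)
      ≤ lam * (p + (1 - p) * max ((Real.exp lam - 1) / lam) b) :=
  calc p * lam + (1 - p) * (Real.exp lam - 1)
      = lam * (p + (1 - p) * ((Real.exp lam - 1) / lam)) := by field_simp
    _ ≤ _ := by
      gcongr
      exact le_max_left _ _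

variable {Ω : Type*} [MeasurableSpace Ω] {P : Measure Ω} {Z I : Ω → ℕ}

lemma ae_eq_zero_or_eq_one [IsProbabilityMeasure P] (hI : Measurable I)
    (h : P {ω | I ω = 0} + P {ω | I ω = 1} = 1) : ∀ᵐ ω ∂P, I ω = 0 ∨ I ω = 1 := by
  have hI0 := hI (measurableSet_singleton 0)
  have hI1 := hI (measurableSet_singleton 1)
  refine (prob_compl_eq_zero_iff (hI0.union hI1)).2 ?_
  rw [measure_union (Set.disjoint_left.2 fun ω h0 h1 ↦ by simp_all) hI1]
  exact h

lemma measure_mul_preimage_singleton (hZ : Measurable Z) (hI : Measurable I)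
    (hindep : IndepFun Z I P) (hI01 : ∀ᵐ ω ∂P, I ω = 0 ∨ I ω = 1) (n : ℕ) :
    P {ω | I ω * Z ω = n}
      = (if n = 0 then P {ω | I ω = 0} else 0) + P {ω | I ω = 1} * P {ω | Z ω = n} := by
  have hae : ({ω | I ω * Z ω = n} : Set Ω)
      =ᵐ[P] ({ω | I ω = 0 ∧ n = 0} ∪ ({ω | Z ω = n} ∩ {ω | I ω = 1}) : Set Ω) := by
    refine Filter.eventuallyEq_set.2 ?_
    filter_upwards [hI01] with ω hω
    rcases hω with h | h <;> simp [h, eq_comm]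
  have hdisj : Disjoint {ω | I ω = 0 ∧ n = 0} ({ω | Z ω = n} ∩ {ω | I ω = 1}) :=
    Set.disjoint_left.2 fun ω h0 h1 ↦ by simp_all
  have hprod : P ({ω | Z ω = n} ∩ {ω | I ω = 1}) = P {ω | Z ω = n} * P {ω | I ω = 1} :=
    hindep.measure_inter_preimage_eq_mul _ _ (measurableSet_singleton n) (measurableSet_singleton 1)
  rw [measure_congr hae, measure_union hdisj
    ((hZ (measurableSet_singleton n)).inter (hI (measurableSet_singleton 1))), hprod, mul_comm]
  split_ifs with hn <;> simp [hn]

lemma measure_mul_preimage_eq_ofReal_zipWeight [IsProbabilityMeasure P] (hZ : Measurable Z)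
    (hI : Measurable I) (hindep : IndepFun Z I P) (hlam : 0 ≤ lam) (hp0 : 0 ≤ p) (hp1 : p ≤ 1)
    (hZpmf : ∀ k, P.real {ω | Z ω = k} = poissonWeight lam k)
    (hI1 : P.real {ω | I ω = 1} = p) (hI0 : P.real {ω | I ω = 0} = 1 - p)
    (n : ℕ) : P ((fun ω ↦ I ω * Z ω) ⁻¹' {n}) = ENNReal.ofReal (zipWeight lam p n) := by
  have hofReal : ∀ {s : Set Ω} {x : ℝ}, P.real s = x → P s = ENNReal.ofReal x := fun {s _} h ↦
    h ▸ (ofReal_measureReal (measure_ne_top P s)).symm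
  have hI01 := ae_eq_zero_or_eq_one hI (by
    rw [hofReal hI0, hofReal hI1, ← ENNReal.ofReal_add (sub_nonneg.2 hp1) hp0, sub_add_cancel,
      ENNReal.ofReal_one])
  change P {ω | I ω * Z ω = n} = _
  rw [measure_mul_preimage_singleton hZ hI hindep hI01, hofReal hI1, hofReal (hZpmf n),
    ← ENNReal.ofReal_mul hp0, zipWeight]
  split_ifs
  · rw [hofReal hI0,
      ENNReal.ofReal_add (sub_nonneg.2 hp1) (mul_nonneg hp0 (poissonWeight_nonneg hlam n))]
  · rw [zero_add, zero_add]

end ZeroInflatedPoisson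

/-- **Example (Poincaré inequality for the zero-inflated Poisson distribution).**
Let `Z ~ Po(λ)` and `I ~ Be(p)` be independent and set `Y = I·Z`.  Then the discrete
Poincaré constant of `Y` satisfies
`R_Y ≤ λ·(p + (1−p)·max{(e^λ − 1)/λ, e^λ/((1−p)e^λ + p)})`; that is, every
`g : ℤ⁺ → ℝ` with `E[g(Y)²] < ∞` and `E[g(Y)] = 0` satisfies
`E[g(Y)²] ≤ R·E[Δg(Y)²]` for this bound `R`. -/
theorem zero_inflated_poisson_poincare
    {Ω : Type*} [MeasurableSpace Ω] (P : Measure Ω) [IsProbabilityMeasure P]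
    (lam : ℝ) (hlam : 0 < lam) (p : ℝ) (hp0 : 0 < p) (hp1 : p ≤ 1)
    (Z I : Ω → ℕ) (hZmeas : Measurable Z) (hImeas : Measurable I)
    (hZpmf : ∀ k : ℕ, (P {ω | Z ω = k}).toReal
      = Real.exp (-lam) * lam ^ k / (Nat.factorial k : ℝ))
    (hI1 : (P {ω | I ω = 1}).toReal = p)
    (hI0 : (P {ω | I ω = 0}).toReal = 1 - p)
    (hindep : IndepFun Z I P) :
    ∀ g : ℕ → ℝ, Integrable (fun ω => g (I ω * Z ω)) P →
      (∫⁻ ω, ENNReal.ofReal ((g (I ω * Z ω)) ^ 2) ∂P) < ⊤ →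
      (∫ ω, g (I ω * Z ω) ∂P) = 0 →
      ∫⁻ ω, ENNReal.ofReal ((g (I ω * Z ω)) ^ 2) ∂P
        ≤ ENNReal.ofReal (lam * (p + (1 - p)
              * max ((Real.exp lam - 1) / lam)
                  (Real.exp lam / ((1 - p) * Real.exp lam + p))))
            * ∫⁻ ω, ENNReal.ofReal ((g (I ω * Z ω + 1) - g (I ω * Z ω)) ^ 2) ∂P := by
  open DiscretePoincare ZeroInflatedPoisson in
  intro g hint hsq hmean
  have hY : Measurable fun ω ↦ I ω * Z ω := hImeas.mul hZmeas
  have hw0 := zipWeight_nonneg hlam.le hp0.le hp1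
  have hlaw := measure_mul_preimage_eq_ofReal_zipWeight hZmeas hImeas hindep hlam.le hp0.le hp1
    hZpmf hI1 hI0
  calc ∫⁻ ω, ENNReal.ofReal ((g (I ω * Z ω)) ^ 2) ∂P
      = ∑' n, ENNReal.ofReal (zipWeight lam p n * g n ^ 2) :=
        lintegral_ofReal_comp_eq_tsum hY hw0 hlaw fun n ↦ g n ^ 2
    _ ≤ ENNReal.ofReal (p * lam + (1 - p) * (Real.exp lam - 1))
          * ∑' n, ENNReal.ofReal (zipWeight lam p n * (g (n + 1) - g n) ^ 2) :=
        tsum_ofReal_mul_sq_le_of_tailCov_le hw0 (hasSum_zipWeight lam p)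
          (hasSum_mul_zipWeight lam p)
          (summable_mul_of_lintegral_lt_top hY hw0 hlaw (fun n ↦ sq_nonneg (g n)) hsq)
          (hmean ▸ hasSum_mul_integral_comp hY hw0 hlaw hint)
          (tailCov_zipWeight_le hlam.le hp0.le hp1)
    _ ≤ _ := by
        rw [lintegral_ofReal_comp_eq_tsum hY hw0 hlaw fun n ↦ (g (n + 1) - g n) ^ 2]
        gcongr
        exact add_mul_exp_sub_one_le_mul_max hlam hp1 _
end
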